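/- arXiv:2108.06690 — 2 statements merged into one kernel-verified Lean document; each statement's English description precedes it below -/
import Mathlib

section
/- If (φ, ψ) is an n×n matrix factorization of f ∈ R and (φ', ψ') is an m×m matrix factorization of g ∈ S (both viewed over L = K[[x,y]]), then the Yoshino tensor product X⊗̂X' = ([[φ⊗1ₘ, 1ₙ⊗φ'],[-1ₙ⊗ψ', ψ⊗1ₘ]], [[ψ⊗1ₘ, -1ₙ⊗φ'],[1ₙ⊗ψ', φ⊗1ₘ]]) is a 2nm × 2nm matrix factorization of f + g. -/
open Matrix Kronecker

/-- Yoshino's tensor product of a matrix factorization of `f` with one of `g`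
is a (2nm × 2nm) matrix factorization of `f + g`. -/
theorem stmt1 {R : Type*} [CommRing R] {n m : ℕ} (f g : R)
    (φ ψ : Matrix (Fin n) (Fin n) R) (φ' ψ' : Matrix (Fin m) (Fin m) R)
    (h1 : φ * ψ = f • 1) (h2 : ψ * φ = f • 1)
    (h3 : φ' * ψ' = g • 1) (h4 : ψ' * φ' = g • 1) :
    fromBlocks (φ ⊗ₖ (1 : Matrix (Fin m) (Fin m) R)) ((1 : Matrix (Fin n) (Fin n) R) ⊗ₖ φ')
        (-((1 : Matrix (Fin n) (Fin n) R) ⊗ₖ ψ')) (ψ ⊗ₖ (1 : Matrix (Fin m) (Fin m) R)) *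
      fromBlocks (ψ ⊗ₖ (1 : Matrix (Fin m) (Fin m) R)) (-((1 : Matrix (Fin n) (Fin n) R) ⊗ₖ φ'))
        ((1 : Matrix (Fin n) (Fin n) R) ⊗ₖ ψ') (φ ⊗ₖ (1 : Matrix (Fin m) (Fin m) R)) =
      (f + g) • 1 ∧
    fromBlocks (ψ ⊗ₖ (1 : Matrix (Fin m) (Fin m) R)) (-((1 : Matrix (Fin n) (Fin n) R) ⊗ₖ φ'))
        ((1 : Matrix (Fin n) (Fin n) R) ⊗ₖ ψ') (φ ⊗ₖ (1 : Matrix (Fin m) (Fin m) R)) *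
      fromBlocks (φ ⊗ₖ (1 : Matrix (Fin m) (Fin m) R)) ((1 : Matrix (Fin n) (Fin n) R) ⊗ₖ φ')
        (-((1 : Matrix (Fin n) (Fin n) R) ⊗ₖ ψ')) (ψ ⊗ₖ (1 : Matrix (Fin m) (Fin m) R)) =
      (f + g) • 1 := by
  constructor <;>
  · rw [fromBlocks_multiply]
    simp only [Matrix.neg_mul, Matrix.mul_neg, ← mul_kronecker_mul, Matrix.mul_one,
      Matrix.one_mul, h1, h2, h3, h4, neg_neg, smul_kronecker, kronecker_smul,
      one_kronecker_one, neg_add_cancel, add_neg_cancel]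
    rw [show (f • (1 : Matrix (Fin n × Fin m) _ R) + g • 1) = (f + g) • 1 by rw [add_smul],
      show (g • (1 : Matrix (Fin n × Fin m) _ R) + f • 1) = (f + g) • 1 by rw [add_smul, add_comm],
      ← fromBlocks_one, fromBlocks_smul, smul_zero]
end

section
/- For morphisms ζ_f : X_f → X_f' in MF(f) and ζ_g : X_g → X_g' in MF(g), the assignment ζ_f ⊗̃ ζ_g = ((α_f⊗α_g)⊕(α_f⊗α_g), (β_f⊗β_g)⊕(β_f⊗β_g)) is a morphism X_f ⊗̃ X_g → X_f' ⊗̃ X_g' in MF(fg), and this makes ⊗̃ a bifunctor (it preserves identities and composition in each variable). -/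
open Matrix Kronecker

/-- (α, β) is a morphism (φ₁,ψ₁) → (φ₂,ψ₂) of matrix factorizations. -/
def IsMFHom {R : Type*} [CommRing R] {ι κ : Type*} [Fintype ι] [Fintype κ]
    (φ₁ ψ₁ : Matrix ι ι R) (φ₂ ψ₂ : Matrix κ κ R) (α β : Matrix κ ι R) : Prop :=
  α * φ₁ = φ₂ * β ∧ ψ₂ * α = β * ψ₁

/-- The "doubling" A ↦ A ⊕ A appearing in the multiplicative tensor product. -/
def dbl {R : Type*} [CommRing R] {ι ι' : Type*} (A : Matrix ι ι' R) :
    Matrix (ι ⊕ ι) (ι' ⊕ ι') R :=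
  fromBlocks A 0 0 A

lemma dbl_mul {R : Type*} [CommRing R] {ι ι' ι'' : Type*} [Fintype ι']
    (A : Matrix ι'' ι' R) (B : Matrix ι' ι R) : dbl A * dbl B = dbl (A * B) := by
  simp [dbl, fromBlocks_multiply]

lemma dbl_one {R : Type*} [CommRing R] {ι : Type*} [DecidableEq ι] :
    dbl (1 : Matrix ι ι R) = 1 := by
  simp [dbl, fromBlocks_one]

/-- ζ_f ⊗̃ ζ_g = ((α_f⊗α_g)⊕(α_f⊗α_g), (β_f⊗β_g)⊕(β_f⊗β_g)) is a morphism
X_f ⊗̃ X_g → X_f' ⊗̃ X_g' in MF(fg), and ⊗̃ is bifunctorial: it preserves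
identities and composition. -/
theorem stmt11 {R : Type*} [CommRing R] :
    (∀ (n n' m m' : ℕ) (f g : R)
      (φ₁ ψ₁ : Matrix (Fin n) (Fin n) R) (φ₂ ψ₂ : Matrix (Fin n') (Fin n') R)
      (σ₁ ρ₁ : Matrix (Fin m) (Fin m) R) (σ₂ ρ₂ : Matrix (Fin m') (Fin m') R)
      (αf βf : Matrix (Fin n') (Fin n) R) (αg βg : Matrix (Fin m') (Fin m) R),
      φ₁ * ψ₁ = f • 1 → ψ₁ * φ₁ = f • 1 → φ₂ * ψ₂ = f • 1 → ψ₂ * φ₂ = f • 1 →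
      σ₁ * ρ₁ = g • 1 → ρ₁ * σ₁ = g • 1 → σ₂ * ρ₂ = g • 1 → ρ₂ * σ₂ = g • 1 →
      IsMFHom φ₁ ψ₁ φ₂ ψ₂ αf βf → IsMFHom σ₁ ρ₁ σ₂ ρ₂ αg βg →
      IsMFHom (dbl (φ₁ ⊗ₖ σ₁)) (dbl (ψ₁ ⊗ₖ ρ₁)) (dbl (φ₂ ⊗ₖ σ₂)) (dbl (ψ₂ ⊗ₖ ρ₂))
        (dbl (αf ⊗ₖ αg)) (dbl (βf ⊗ₖ βg))) ∧
    (∀ (n m : ℕ),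
      dbl ((1 : Matrix (Fin n) (Fin n) R) ⊗ₖ (1 : Matrix (Fin m) (Fin m) R)) = 1) ∧
    (∀ (n n' n'' m m' m'' : ℕ)
      (α : Matrix (Fin n'') (Fin n') R) (α' : Matrix (Fin n') (Fin n) R)
      (γ : Matrix (Fin m'') (Fin m') R) (γ' : Matrix (Fin m') (Fin m) R),
      dbl ((α * α') ⊗ₖ (γ * γ')) = dbl (α ⊗ₖ γ) * dbl (α' ⊗ₖ γ')) := by
  refine ⟨?_, ?_, ?_⟩
  · rintro n n' m m' f g φ₁ ψ₁ φ₂ ψ₂ σ₁ ρ₁ σ₂ ρ₂ αf βf αg βg _ _ _ _ _ _ _ _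
      ⟨hf1, hf2⟩ ⟨hg1, hg2⟩
    constructor
    · rw [dbl_mul, dbl_mul, ← Matrix.mul_kronecker_mul, ← Matrix.mul_kronecker_mul,
        hf1, hg1]
    · rw [dbl_mul, dbl_mul, ← Matrix.mul_kronecker_mul, ← Matrix.mul_kronecker_mul,
        hf2, hg2]
  · intro n m
    rw [Matrix.one_kronecker_one, dbl_one]
  · intro n n' n'' m m' m'' α α' γ γ'
    rw [dbl_mul, Matrix.mul_kronecker_mul]
end
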